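/- Let H be the n×n matrix with entries H(i,j) = n^{-1}K_{b_n}(t_j−t_i). There exist a constant C > 0, an integer N, and real numbers c_{n,i} such that for all n ≥ N, all indices i with nb_nL ≤ i ≤ n−nb_nL and all j ∈ {1,…,n}, S_d(i,j) = H(i,j)(1 + c_{n,i}), where sup over such i of |c_{n,i}| ≤ C/(nb_n). -/

import Mathlib

open MeasureTheory ProbabilityTheory Filter Matrix

noncomputable section

/-- Design points `t_i = i/n`, `i = 1,…,n` (here `0`-indexed: `dpt n i = (i+1)/n`). -/
def dpt (n : ℕ) (i : Fin n) : ℝ := ((i : ℕ) + 1) / n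

/-- The rescaled kernel `K_b(t) = K(t/b)/b`. -/
def scaledKer (K : ℝ → ℝ) (b t : ℝ) : ℝ := K (t / b) / b

/-- The `2 × 2` matrix `X(t_i)ᵀ W(t_i) X(t_i)` of local linear regression. -/
def locMat (K : ℝ → ℝ) (b : ℝ) (n : ℕ) (i : Fin n) : Matrix (Fin 2) (Fin 2) ℝ :=
  Matrix.of fun a c =>
    ∑ j : Fin n, scaledKer K b (dpt n j - dpt n i) * (dpt n j - dpt n i) ^ ((a : ℕ) + (c : ℕ))

/-- The local linear smoothing matrix `S_d`:
`S_d(i,j) = (1,0){X(tᵢ)ᵀW(tᵢ)X(tᵢ)}⁻¹(1, tⱼ-tᵢ)ᵀ K_b(tⱼ-tᵢ)`. -/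
def smoothMat (K : ℝ → ℝ) (b : ℝ) (n : ℕ) : Matrix (Fin n) (Fin n) ℝ :=
  Matrix.of fun i j =>
    ((locMat K b n i)⁻¹ *ᵥ ![1, dpt n j - dpt n i]) 0 * scaledKer K b (dpt n j - dpt n i)

/-!
Continuity of `K` extends its vanishing to `|t| = L`, so for an interior index `i` the whole
window `|tⱼ - tᵢ| < bL` lies inside the design and every local moment `sₖ` is a sum over a
lattice window symmetric about `tᵢ`. Symmetry of `K` then kills `s₁`, so `XᵀWX = diag(s₀, s₂)`
and `S_d(i,j) = K_b(tⱼ - tᵢ)/s₀`, i.e. `c_{n,i} = n/s₀ - 1`. The midpoint rule for the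
Lipschitz kernel with mesh `1/(nb)` gives `|s₀/n - 1| ≤ C/(nb)`, which bounds `c_{n,i}`.
Finally `s₂ ≠ 0` because otherwise `s₀` would reduce to its diagonal term `K(0)/b`.
-/

open Finset Topology

lemma eq_zero_of_le_abs_of_continuous {K : ℝ → ℝ} {L : ℝ} (hL : 0 < L) (hK : Continuous K)
    (hK_supp : ∀ t, L < |t| → K t = 0) {t : ℝ} (ht : L ≤ |t|) : K t = 0 := by
  have hlim : Tendsto (fun s : ℝ => K (s * t)) (𝓝[>] 1) (𝓝 (K t)) := by
    have hcont : Continuous fun s : ℝ => K (s * t) := by fun_prop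
    simpa using (hcont.tendsto 1).mono_left nhdsWithin_le_nhds
  have hzero : ∀ᶠ s in 𝓝[>] (1 : ℝ), K (s * t) = 0 := by
    filter_upwards [self_mem_nhdsWithin] with s (hs : 1 < s)
    apply hK_supp
    rw [abs_mul, abs_of_pos (by linarith)]
    nlinarith [hL.trans_le ht]
  exact tendsto_nhds_unique hlim (tendsto_const_nhds.congr' (hzero.mono fun s hs => hs.symm))

lemma abs_mul_sub_intervalIntegral_le {f : ℝ → ℝ} {C : NNReal} (hf : LipschitzWith C f)
    {a h : ℝ} (hh : 0 ≤ h) : |f (a + h / 2) * h - ∫ x in a..a + h, f x| ≤ C * h ^ 2 := by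
  have hbound : ∀ x ∈ Set.uIoc a (a + h), ‖f x - f (a + h / 2)‖ ≤ C * (h / 2) := by
    intro x hx
    rw [Set.uIoc_of_le (by linarith)] at hx
    calc ‖f x - f (a + h / 2)‖ = dist (f x) (f (a + h / 2)) := rfl
      _ ≤ C * dist x (a + h / 2) := hf.dist_le_mul _ _
      _ ≤ C * (h / 2) := by
        gcongr
        rw [Real.dist_eq, abs_le]
        constructor <;> linarith [hx.1, hx.2]
  have hint := intervalIntegral.norm_integral_le_of_norm_le_const hbound
  rw [intervalIntegral.integral_sub (hf.continuous.intervalIntegrable _ _)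
    intervalIntegrable_const, intervalIntegral.integral_const, add_sub_cancel_left,
    abs_of_nonneg hh, smul_eq_mul, Real.norm_eq_abs] at hint
  rw [abs_sub_comm, mul_comm]
  nlinarith [C.coe_nonneg]

lemma abs_sum_mul_sub_intervalIntegral_le {f : ℝ → ℝ} {C : NNReal} (hf : LipschitzWith C f)
    {x₀ h : ℝ} (hh : 0 ≤ h) (N : ℕ) :
    |∑ k ∈ range N, f (x₀ + (k + 1 / 2) * h) * h - ∫ x in x₀..x₀ + N * h, f x|
      ≤ N * (C * h ^ 2) := by
  have hsplit : ∫ x in x₀..x₀ + N * h, f x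
      = ∑ k ∈ range N, ∫ x in x₀ + k * h..x₀ + k * h + h, f x := by
    have := intervalIntegral.sum_integral_adjacent_intervals (a := fun k : ℕ => x₀ + k * h)
      (n := N) (f := f) (μ := MeasureTheory.volume) fun k _ => hf.continuous.intervalIntegrable _ _
    simp only [Nat.cast_zero, zero_mul, add_zero, Nat.cast_succ, add_mul, one_mul,
      ← add_assoc] at this
    exact this.symm
  rw [hsplit, ← sum_sub_distrib]
  calc _ ≤ ∑ k ∈ range N, |f (x₀ + (k + 1 / 2) * h) * h - ∫ x in x₀ + k * h..x₀ + k * h + h, f x| :=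
        abs_sum_le_sum_abs _ _
    _ ≤ ∑ _k ∈ range N, C * h ^ 2 := by
        refine sum_le_sum fun k _ => ?_
        have := abs_mul_sub_intervalIntegral_le hf (a := x₀ + k * h) hh
        rwa [show x₀ + k * h + h / 2 = x₀ + (k + 1 / 2) * h by ring] at this
    _ = N * (C * h ^ 2) := by rw [sum_const, card_range, nsmul_eq_mul]

lemma abs_sum_mul_sub_integral_le {f : ℝ → ℝ} {C : NNReal} (hf : LipschitzWith C f)
    {x₀ h : ℝ} (hh : 0 ≤ h) (N : ℕ) (hsupp : ∀ x, x ∉ Set.Ioc x₀ (x₀ + N * h) → f x = 0) :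
    |∑ k ∈ range N, f (x₀ + (k + 1 / 2) * h) * h - ∫ x, f x| ≤ N * (C * h ^ 2) := by
  have := abs_sum_mul_sub_intervalIntegral_le hf (x₀ := x₀) hh N
  rwa [intervalIntegral.integral_of_le (by nlinarith [N.cast_nonneg (α := ℝ)]),
    MeasureTheory.setIntegral_eq_integral_of_forall_compl_eq_zero hsupp] at this

lemma sum_fin_sub_eq_sum_range {φ : ℝ → ℝ} {R : ℝ} (hφ : ∀ x, R ≤ |x| → φ x = 0) {n M : ℕ}
    (hM : R ≤ M) (i : Fin n) (hi₁ : R ≤ (i : ℕ) + 1) (hi₂ : ((i : ℕ) : ℝ) + 1 ≤ n - R) :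
    ∑ j : Fin n, φ ((j : ℕ) - (i : ℕ)) = ∑ k ∈ range (2 * M + 1), φ (k - M) := by
  set g : ℕ → ℝ := fun k => φ ((k : ℝ) - M - (i : ℕ))
  have h₁ : ∑ j : Fin n, φ ((j : ℕ) - (i : ℕ)) = ∑ k ∈ Ico M (M + n), g k := by
    rw [Fin.sum_univ_eq_sum_range (fun j => φ ((j : ℝ) - (i : ℕ))), sum_Ico_eq_sum_range,
      Nat.add_sub_cancel_left]
    refine sum_congr rfl fun k _ => ?_
    simp only [g]; push_cast; ring_nf
  have h₂ : ∑ k ∈ range (2 * M + 1), φ (k - M) = ∑ k ∈ Ico (i : ℕ) (i + (2 * M + 1)), g k := by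
    rw [sum_Ico_eq_sum_range, Nat.add_sub_cancel_left]
    refine sum_congr rfl fun k _ => ?_
    simp only [g]; push_cast; ring_nf
  rw [h₁, h₂]
  refine sum_congr_of_eq_on_inter ?_ ?_ fun _ _ _ => rfl
  · intro k hk hk'
    simp only [mem_Ico, not_and_or, not_le, not_lt] at hk hk'
    apply hφ
    rcases hk' with hk' | hk'
    · have : (k : ℝ) + 1 ≤ (i : ℕ) := by exact_mod_cast hk'
      rw [le_abs']; left; linarith
    · have : ((i : ℕ) : ℝ) + (2 * M + 1) ≤ k := by exact_mod_cast hk'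
      rw [le_abs']; right; linarith
  · intro k hk hk'
    simp only [mem_Ico, not_and_or, not_le, not_lt] at hk hk'
    apply hφ
    rcases hk' with hk' | hk'
    · have : (k : ℝ) + 1 ≤ M := by exact_mod_cast hk'
      rw [le_abs']; left; linarith
    · have : (M : ℝ) + n ≤ k := by exact_mod_cast hk'
      rw [le_abs']; right; linarith

lemma sum_range_sub_eq_zero_of_odd {ψ : ℝ → ℝ} (hψ : ∀ x, ψ (-x) = -ψ x) (M : ℕ) :
    ∑ k ∈ range (2 * M + 1), ψ (k - M) = 0 := by
  have h := sum_range_reflect (fun k : ℕ => ψ (k - M)) (2 * M + 1)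
  have hrefl : ∀ k ∈ range (2 * M + 1), ψ (((2 * M + 1 - 1 - k : ℕ) : ℝ) - M) = -ψ (k - M) := by
    intro k hk
    rw [mem_range] at hk
    rw [Nat.cast_sub (by omega), ← hψ]
    push_cast; ring_nf
  rw [sum_congr rfl hrefl, sum_neg_distrib] at h
  linarith

lemma abs_inv_sub_one_le {x ε : ℝ} (h : |x - 1| ≤ ε) (hε : ε ≤ 1 / 2) : |x⁻¹ - 1| ≤ 2 * ε := by
  have hx : 1 / 2 ≤ x := by linarith [(abs_le.mp h).1]
  have hε₀ : 0 ≤ ε := (abs_nonneg _).trans h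
  have hx₀ : 0 < x := by linarith
  rw [show x⁻¹ - 1 = -(x - 1) / x by field_simp; ring, abs_div, abs_neg, abs_of_pos hx₀,
    div_le_iff₀ hx₀]
  nlinarith

/-- The local moment `sₖ(tᵢ)`; entry `(a, c)` of `locMat` is `s_{a+c}`. -/
def locMoment (K : ℝ → ℝ) (b : ℝ) (n : ℕ) (i : Fin n) (k : ℕ) : ℝ :=
  ∑ j : Fin n, scaledKer K b (dpt n j - dpt n i) * (dpt n j - dpt n i) ^ k

lemma dpt_sub_dpt (n : ℕ) (i j : Fin n) :
    dpt n j - dpt n i = (((j : ℕ) : ℝ) - (i : ℕ)) / n := by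
  unfold dpt; ring

section Moments

variable {K : ℝ → ℝ} {L b : ℝ} {n : ℕ} {i : Fin n}

lemma locMat_eq_diagonal (h : locMoment K b n i 1 = 0) :
    locMat K b n i = diagonal ![locMoment K b n i 0, locMoment K b n i 2] := by
  ext a c
  fin_cases a <;> fin_cases c
  · rfl
  · exact h
  · exact h
  · rfl

lemma smoothMat_apply_of_locMoment_one_eq_zero (h₁ : locMoment K b n i 1 = 0)
    (h₀ : locMoment K b n i 0 ≠ 0) (h₂ : locMoment K b n i 2 ≠ 0) (j : Fin n) :
    smoothMat K b n i j = (locMoment K b n i 0)⁻¹ * scaledKer K b (dpt n j - dpt n i) := by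
  have hinv : (locMat K b n i)⁻¹
      = diagonal ![(locMoment K b n i 0)⁻¹, (locMoment K b n i 2)⁻¹] := by
    rw [locMat_eq_diagonal h₁]
    refine inv_eq_left_inv ?_
    rw [diagonal_mul_diagonal, ← diagonal_one]
    congr 1
    ext a
    fin_cases a <;> simp [h₀, h₂]
  simp [smoothMat, hinv]

lemma scaledKer_div_eq_zero (hK : ∀ t, L ≤ |t| → K t = 0) (hb : 0 < b) (hn : 0 < n) {x : ℝ}
    (hx : n * b * L ≤ |x|) : scaledKer K b (x / n) = 0 := by
  have hn' : (0 : ℝ) < n := by exact_mod_cast hn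
  rw [scaledKer, hK, zero_div]
  rw [div_div, abs_div, abs_of_pos (mul_pos hn' hb), le_div_iff₀ (mul_pos hn' hb)]
  linarith

lemma locMoment_two_ne_zero (hK_nonneg : ∀ t, 0 ≤ K t) (hb : 0 < b)
    (h : K 0 / (n * b) < locMoment K b n i 0 / n) : locMoment K b n i 2 ≠ 0 := by
  intro h₂
  have hn : (0 : ℝ) < n := by exact_mod_cast i.pos
  have hterm : ∀ j ∈ univ, j ≠ i →
      scaledKer K b (dpt n j - dpt n i) * (dpt n j - dpt n i) ^ 0 = 0 := by
    intro j _ hji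
    have hsq := (sum_eq_zero_iff_of_nonneg fun j _ =>
      mul_nonneg (div_nonneg (hK_nonneg _) hb.le) (sq_nonneg _)).mp h₂ j (mem_univ _)
    have hd : dpt n j - dpt n i ≠ 0 := by
      rw [dpt_sub_dpt, div_ne_zero_iff, sub_ne_zero, Ne, Nat.cast_inj, Fin.val_inj]
      exact ⟨hji, hn.ne'⟩
    rw [pow_zero, mul_one]
    exact (mul_eq_zero.mp hsq).resolve_right (pow_ne_zero 2 hd)
  rw [locMoment, sum_eq_single i hterm (by simp), sub_self, pow_zero, mul_one, scaledKer,
    zero_div, div_div, mul_comm b] at h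
  exact lt_irrefl _ h

variable (hK : ∀ t, L ≤ |t| → K t = 0) (hb : 0 < b)
  (hi₁ : (n : ℝ) * b * L ≤ ((i : ℕ) : ℝ) + 1) (hi₂ : ((i : ℕ) : ℝ) + 1 ≤ n - n * b * L)
include hK hb hi₁ hi₂

lemma locMoment_eq_sum_range {M : ℕ} (hM : n * b * L ≤ M) (k : ℕ) :
    locMoment K b n i k
      = ∑ m ∈ range (2 * M + 1), scaledKer K b ((m - M) / n) * ((m - M) / n) ^ k := by
  simp only [locMoment, dpt_sub_dpt]
  refine sum_fin_sub_eq_sum_range (φ := fun x => scaledKer K b (x / n) * (x / n) ^ k)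
    (fun x hx => ?_) hM i hi₁ hi₂
  rw [scaledKer_div_eq_zero hK hb i.pos hx, zero_mul]

lemma locMoment_one_eq_zero (hK_symm : ∀ t, K (-t) = K t) : locMoment K b n i 1 = 0 := by
  rw [locMoment_eq_sum_range hK hb hi₁ hi₂ (Nat.le_ceil _)]
  refine sum_range_sub_eq_zero_of_odd (ψ := fun x => scaledKer K b (x / n) * (x / n) ^ 1)
    (fun x => ?_) _
  simp only [scaledKer, neg_div, hK_symm]
  ring

lemma abs_locMoment_zero_div_sub_one_le (hL : 0 ≤ L) {CK : NNReal} (hK_lip : LipschitzWith CK K)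
    (hK_int : ∫ t, K t = 1) (hν : 1 ≤ n * b) :
    |locMoment K b n i 0 / n - 1| ≤ CK * (2 * L + 3) / (n * b) := by
  have hn : (0 : ℝ) < n := by exact_mod_cast i.pos
  set ν : ℝ := n * b with hν_def
  set M := ⌈ν * L⌉₊
  have hM : ν * L ≤ M := Nat.le_ceil _
  have hM' : (M : ℝ) ≤ ν * L + 1 := (Nat.ceil_lt_add_one (by positivity)).le
  set x₀ : ℝ := -(M + 1 / 2) / ν
  -- midpoints of the cells of width `1/ν` are the lattice points `(m - M)/ν`
  have hsum : locMoment K b n i 0 / n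
      = ∑ m ∈ range (2 * M + 1), K (x₀ + (m + 1 / 2) * ν⁻¹) * ν⁻¹ := by
    rw [locMoment_eq_sum_range hK hb hi₁ hi₂ hM, sum_div]
    refine sum_congr rfl fun m _ => ?_
    rw [show x₀ + (m + 1 / 2) * ν⁻¹ = (m - M) / ν by simp only [x₀]; field_simp; ring,
      scaledKer, pow_zero, mul_one, div_div, div_div, hν_def, mul_comm b, div_eq_mul_inv]
  have hsupp : ∀ x, x ∉ Set.Ioc x₀ (x₀ + (2 * M + 1 : ℕ) * ν⁻¹) → K x = 0 := by
    intro x hx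
    have hL' : L ≤ (M + 1 / 2) / ν := by rw [le_div_iff₀ (by positivity)]; linarith
    have hx₀ : x₀ + (2 * M + 1 : ℕ) * ν⁻¹ = (M + 1 / 2) / ν := by
      simp only [x₀]; push_cast; field_simp; ring
    simp only [Set.mem_Ioc, not_and_or, not_lt, not_le, hx₀] at hx
    apply hK
    rw [le_abs']
    rcases hx with hx | hx
    · left; simp only [x₀, neg_div] at hx; linarith
    · right; linarith
  have hriemann := abs_sum_mul_sub_integral_le hK_lip (by positivity) _ hsupp
  rw [hK_int] at hriemann
  rw [hsum]
  refine hriemann.trans ?_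
  calc ((2 * M + 1 : ℕ) : ℝ) * (CK * ν⁻¹ ^ 2) ≤ (2 * L + 3) * ν * (CK * ν⁻¹ ^ 2) := by
        gcongr
        push_cast
        nlinarith
    _ = CK * (2 * L + 3) / ν := by field_simp

end Moments

theorem statement10_general (K : ℝ → ℝ) (L : ℝ) (hL : 0 < L)
    (hK_symm : ∀ t, K (-t) = K t) (CK : NNReal) (hK_lip : LipschitzWith CK K)
    (hK_nonneg : ∀ t, 0 ≤ K t) (hK_supp : ∀ t, L < |t| → K t = 0)
    (hK_int : ∫ t, K t = 1)
    (b : ℕ → ℝ) (hb_pos : ∀ n, 0 < b n)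
    (hnb_lim : Tendsto (fun n : ℕ => (n : ℝ) * b n) atTop atTop) :
    ∃ C > (0 : ℝ), ∃ N : ℕ, ∀ n ≥ N, ∃ c : Fin n → ℝ,
      ∀ i : Fin n, (n : ℝ) * b n * L ≤ ((i : ℕ) : ℝ) + 1 →
        ((i : ℕ) : ℝ) + 1 ≤ (n : ℝ) - (n : ℝ) * b n * L →
        |c i| ≤ C / ((n : ℝ) * b n) ∧
        ∀ j : Fin n,
          smoothMat K (b n) n i j =
            (n : ℝ)⁻¹ * scaledKer K (b n) (dpt n j - dpt n i) * (1 + c i) := by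
  have hK : ∀ t, L ≤ |t| → K t = 0 := fun t =>
    eq_zero_of_le_abs_of_continuous hL hK_lip.continuous hK_supp
  set C₁ : ℝ := CK * (2 * L + 3)
  have hC₁ : 0 ≤ C₁ := by positivity
  have hK₀ := hK_nonneg 0
  obtain ⟨N, hN⟩ := eventually_atTop.mp (hnb_lim.eventually_ge_atTop (2 * C₁ + 2 * K 0 + 1))
  refine ⟨2 * C₁ + 1, by positivity, N, fun n hn =>
    ⟨fun i => n / locMoment K (b n) n i 0 - 1, fun i hi₁ hi₂ => ?_⟩⟩
  have hν := hN n hn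
  have hn₀ : (0 : ℝ) < n := Nat.cast_pos.mpr i.pos
  have hν₀ : 0 < (n : ℝ) * b n := by linarith
  have hS₀ := abs_locMoment_zero_div_sub_one_le hK (hb_pos n) hi₁ hi₂ hL.le hK_lip hK_int
    (by linarith)
  have hε : C₁ / (n * b n) ≤ 1 / 2 := by rw [div_le_iff₀ hν₀]; linarith
  have hS₀_half : 1 / 2 ≤ locMoment K (b n) n i 0 / n := by linarith [(abs_le.mp hS₀).1]
  have hS₀_pos : 0 < locMoment K (b n) n i 0 :=
    (div_pos_iff_of_pos_right hn₀).mp (by linarith)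
  have hK₀_lt : K 0 / (n * b n) < 1 / 2 := by rw [div_lt_iff₀ hν₀]; linarith
  refine ⟨?_, fun j => ?_⟩
  · calc |(n : ℝ) / locMoment K (b n) n i 0 - 1|
          = |(locMoment K (b n) n i 0 / n)⁻¹ - 1| := by rw [inv_div]
      _ ≤ 2 * (C₁ / (n * b n)) := abs_inv_sub_one_le hS₀ hε
      _ ≤ (2 * C₁ + 1) / (n * b n) := by rw [← mul_div_assoc]; gcongr; linarith
  · rw [smoothMat_apply_of_locMoment_one_eq_zero
      (locMoment_one_eq_zero hK (hb_pos n) hi₁ hi₂ hK_symm) hS₀_pos.ne'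
      (locMoment_two_ne_zero hK_nonneg (hb_pos n) (by linarith))]
    field_simp
    ring

theorem statement10 (K : ℝ → ℝ) (L : ℝ) (hL : 0 < L)
    (hK_symm : ∀ t, K (-t) = K t) (CK : NNReal) (hK_lip : LipschitzWith CK K)
    (CB : ℝ) (hK_bdd : ∀ t, K t ≤ CB)
    (hK_nonneg : ∀ t, 0 ≤ K t) (hK_supp : ∀ t, L < |t| → K t = 0)
    (hK_int : ∫ t, K t = 1)
    (b : ℕ → ℝ) (hb_pos : ∀ n, 0 < b n)
    (hb_lim : Tendsto b atTop (nhds 0))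
    (hnb_lim : Tendsto (fun n : ℕ => (n : ℝ) * b n) atTop atTop) :
    ∃ C > (0 : ℝ), ∃ N : ℕ, ∀ n ≥ N, ∃ c : Fin n → ℝ,
      ∀ i : Fin n, (n : ℝ) * b n * L ≤ ((i : ℕ) : ℝ) + 1 →
        ((i : ℕ) : ℝ) + 1 ≤ (n : ℝ) - (n : ℝ) * b n * L →
        |c i| ≤ C / ((n : ℝ) * b n) ∧
        ∀ j : Fin n,
          smoothMat K (b n) n i j =
            (n : ℝ)⁻¹ * scaledKer K (b n) (dpt n j - dpt n i) * (1 + c i) :=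
  statement10_general K L hL hK_symm CK hK_lip hK_nonneg hK_supp hK_int b hb_pos hnb_lim
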